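/- (Two invariant parallel spinors for example (5).) Fix t > 0 and let the connection matrices of example (5) be A₁ = 0, A₂ = −t(−E₂₇−E₄₅), A₃ = −t(−E₃₇−E₄₆), A₄ = −t(−E₂₅−E₃₆+2E₄₇), A₅ = −t(E₂₄+E₅₇), A₆ = −t(E₃₄+E₆₇), A₇ = 0. Then the space {ψ ∈ ℝ⁸ : σ(A_i)·ψ = 0 for all i = 1,…,7} is exactly the two-dimensional linear span of (0,0,0,0,1,1,−1,1) and (−1,1,1,1,0,0,0,0). -/

import Mathlib

open Matrix

noncomputable section

/-- `E8 i j` is the 8×8 skew-symmetric matrix sending the `i`-th basis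
vector to the `j`-th, the `j`-th to minus the `i`-th, and all others to 0. -/
def E8 (i j : Fin 8) : Matrix (Fin 8) (Fin 8) ℝ :=
  Matrix.single j i 1 - Matrix.single i j 1

/-- The matrices `e₁,…,e₇` of the 7-dimensional spin representation on ℝ⁸
(indices shifted to be 0-based). -/
def g : Fin 7 → Matrix (Fin 8) (Fin 8) ℝ :=
  ![E8 0 7 + E8 1 6 - E8 2 5 - E8 3 4,
    -E8 0 6 + E8 1 7 + E8 2 4 - E8 3 5,
    -E8 0 5 + E8 1 4 - E8 2 7 + E8 3 6,
    -E8 0 4 - E8 1 5 - E8 2 6 - E8 3 7,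
    -E8 0 2 - E8 1 3 + E8 4 6 + E8 5 7,
    E8 0 3 - E8 1 2 - E8 4 7 + E8 5 6,
    E8 0 1 - E8 2 3 - E8 4 5 + E8 6 7]

/-- 7×7 version of `E_{ij}`. -/
def E7 (i j : Fin 7) : Matrix (Fin 7) (Fin 7) ℝ :=
  Matrix.single j i 1 - Matrix.single i j 1

/-- The spin lift `σ(A) = (1/2) Σ_{p<q} a_{pq} e_p e_q` of a skew-symmetric
7×7 matrix `A = Σ_{p<q} a_{pq} E_{pq}` (so that `a_{pq} = A q p` for `p < q`). -/
def spinLift (A : Matrix (Fin 7) (Fin 7) ℝ) : Matrix (Fin 8) (Fin 8) ℝ :=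
  (1/2 : ℝ) • ∑ p : Fin 7, ∑ q : Fin 7, if p < q then A q p • (g p * g q) else 0

/-- Clifford action of the interior product `e_i ⌟ e_{abc}` (for `a<b<c`). -/
def contr (i a b c : Fin 7) : Matrix (Fin 8) (Fin 8) ℝ :=
  (if i = a then g b * g c else 0) - (if i = b then g a * g c else 0) +
    (if i = c then g a * g b else 0)

/-- The ordered index triples (0-based) of the eleven basis 3-forms spanning `Λ³₁₁`:
`e₁₂₅, e₁₃₆, e₂₄₆, e₃₄₅, e₁₂₆, e₃₄₆, e₁₃₅, e₂₄₅, e₁₄₇, e₅₆₇, e₂₃₇`. -/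
def tri : Fin 11 → Fin 7 × Fin 7 × Fin 7 :=
  ![(0,1,4),(0,2,5),(1,3,5),(2,3,4),(0,1,5),(2,3,5),(0,2,4),(1,3,4),(0,3,6),(4,5,6),(1,2,6)]

/-- For `T = Σ_k c_k e_{tri k} ∈ Λ³₁₁`, the Clifford action `Cl(e_i ⌟ T)`. -/
def clContr (c : Fin 11 → ℝ) (i : Fin 7) : Matrix (Fin 8) (Fin 8) ℝ :=
  ∑ k : Fin 11, c k • contr i (tri k).1 (tri k).2.1 (tri k).2.2

/-- `ψ` is `∇ᵀ`-parallel for connection matrices `A` and torsion `T ∈ Λ³₁₁`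
with coefficient vector `c`. -/
def IsParallel (A : Fin 7 → Matrix (Fin 7) (Fin 7) ℝ) (c : Fin 11 → ℝ)
    (ψ : Fin 8 → ℝ) : Prop :=
  ∀ i : Fin 7, (spinLift (A i)).mulVec ψ + (clContr c i).mulVec ψ = 0

/-- Connection matrices of example (5). -/
def Aex5 (t : ℝ) : Fin 7 → Matrix (Fin 7) (Fin 7) ℝ :=
  ![0,
    (-t) • (-E7 1 6 - E7 3 4),
    (-t) • (-E7 2 6 - E7 3 5),
    (-t) • (-E7 1 4 - E7 2 5 + (2:ℝ) • E7 3 6),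
    (-t) • (E7 1 3 + E7 4 6),
    (-t) • (E7 2 3 + E7 5 6), 0]

/-!
`spinLift` is linear and `Aex5 t = t • Aex5 1`, so for `t ≠ 0` the common kernel does not depend
on `t`. For `t = 1`, six rows of the explicit matrices `σ(A_i)` already force
`ψ = ψ₇ • v₁ + ψ₃ • v₂` for the two spanning vectors `v₁, v₂`, and a direct computation shows
that every `σ(A_i)` annihilates both.
-/

lemma spinLift_smul (c : ℝ) (A : Matrix (Fin 7) (Fin 7) ℝ) :
    spinLift (c • A) = c • spinLift A := by
  simp only [spinLift, Finset.smul_sum, smul_ite, smul_zero, Matrix.smul_apply, smul_eq_mul,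
    mul_smul, smul_comm c]

lemma spinLift_zero : spinLift 0 = 0 := by
  simp [spinLift]

lemma Aex5_eq_smul (t : ℝ) : Aex5 t = t • Aex5 1 := by
  ext i : 1
  fin_cases i <;> simp [Aex5] <;> module

section ExplicitAction

variable (ψ : Fin 8 → ℝ)

lemma spinLift_Aex5_one_zero : spinLift (Aex5 1 0) = 0 := spinLift_zero

lemma spinLift_Aex5_one_six : spinLift (Aex5 1 6) = 0 := spinLift_zero

lemma spinLift_Aex5_one_one_mulVec : spinLift (Aex5 1 1) *ᵥ ψ = (2⁻¹ : ℝ) •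
    ![-ψ 6 - ψ 7, -ψ 6 - ψ 7, ψ 4 - ψ 5, -ψ 4 + ψ 5, -ψ 2 + ψ 3, ψ 2 - ψ 3, ψ 0 + ψ 1,
      ψ 0 + ψ 1] := by
  ext k
  fin_cases k <;>
  simp [Aex5, spinLift, Fin.sum_univ_seven, E7, g, E8, Matrix.mul_apply, Matrix.mulVec,
    dotProduct, Fin.sum_univ_eight, Matrix.single] <;> ring

lemma spinLift_Aex5_one_two_mulVec : spinLift (Aex5 1 2) *ᵥ ψ = (2⁻¹ : ℝ) •
    ![-ψ 4 + ψ 7, -ψ 5 - ψ 6, ψ 5 + ψ 6, -ψ 4 + ψ 7, ψ 0 + ψ 3, ψ 1 - ψ 2, ψ 1 - ψ 2,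
      -ψ 0 - ψ 3] := by
  ext k
  fin_cases k <;>
  simp [Aex5, spinLift, Fin.sum_univ_seven, E7, g, E8, Matrix.mul_apply, Matrix.mulVec,
    dotProduct, Fin.sum_univ_eight, Matrix.single] <;> ring

lemma spinLift_Aex5_one_three_mulVec : spinLift (Aex5 1 3) *ᵥ ψ = (2⁻¹ : ℝ) •
    ![ψ 4 - 2 * ψ 5 - ψ 6, 2 * ψ 4 - ψ 5 - ψ 7, -ψ 4 + ψ 6 + 2 * ψ 7, -ψ 5 - 2 * ψ 6 - ψ 7,
      -ψ 0 - 2 * ψ 1 + ψ 2, 2 * ψ 0 + ψ 1 + ψ 3, ψ 0 - ψ 2 + 2 * ψ 3, ψ 1 - 2 * ψ 2 + ψ 3] := by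
  ext k
  fin_cases k <;>
  simp [Aex5, spinLift, Fin.sum_univ_seven, E7, g, E8, Matrix.mul_apply, Matrix.mulVec,
    dotProduct, Fin.sum_univ_eight, Matrix.single] <;> ring

lemma spinLift_Aex5_one_four_mulVec : spinLift (Aex5 1 4) *ᵥ ψ = (2⁻¹ : ℝ) •
    ![ψ 2 - ψ 3, ψ 2 - ψ 3, -ψ 0 - ψ 1, ψ 0 + ψ 1, -ψ 6 - ψ 7, ψ 6 + ψ 7, ψ 4 - ψ 5,
      ψ 4 - ψ 5] := by
  ext k
  fin_cases k <;>
  simp [Aex5, spinLift, Fin.sum_univ_seven, E7, g, E8, Matrix.mul_apply, Matrix.mulVec,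
    dotProduct, Fin.sum_univ_eight, Matrix.single] <;> ring

lemma spinLift_Aex5_one_five_mulVec : spinLift (Aex5 1 5) *ᵥ ψ = (2⁻¹ : ℝ) •
    ![ψ 1 - ψ 2, -ψ 0 - ψ 3, ψ 0 + ψ 3, ψ 1 - ψ 2, -ψ 5 - ψ 6, ψ 4 - ψ 7, ψ 4 - ψ 7,
      ψ 5 + ψ 6] := by
  ext k
  fin_cases k <;>
  simp [Aex5, spinLift, Fin.sum_univ_seven, E7, g, E8, Matrix.mul_apply, Matrix.mulVec,
    dotProduct, Fin.sum_univ_eight, Matrix.single] <;> ring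

end ExplicitAction


theorem forall_spinLift_Aex5_one_mulVec_eq_zero_iff (ψ : Fin 8 → ℝ) :
    (∀ i : Fin 7, spinLift (Aex5 1 i) *ᵥ ψ = 0) ↔
      ψ ∈ Submodule.span ℝ
        {(![0, 0, 0, 0, 1, 1, -1, 1] : Fin 8 → ℝ), ![-1, 1, 1, 1, 0, 0, 0, 0]} := by
  rw [Submodule.mem_span_pair]
  constructor
  · intro h
    have h1 := h 1
    have h4 := h 4
    have h5 := h 5
    rw [spinLift_Aex5_one_one_mulVec, smul_eq_zero_iff_right (by norm_num)] at h1
    rw [spinLift_Aex5_one_four_mulVec, smul_eq_zero_iff_right (by norm_num)] at h4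
    rw [spinLift_Aex5_one_five_mulVec, smul_eq_zero_iff_right (by norm_num)] at h5
    have e45 : ψ 4 - ψ 5 = 0 := by simpa using congrFun h1 2
    have e23 : ψ 2 - ψ 3 = 0 := by simpa using congrFun h4 0
    have e67 : -ψ 6 - ψ 7 = 0 := by simpa using congrFun h4 4
    have e12 : ψ 1 - ψ 2 = 0 := by simpa using congrFun h5 0
    have e03 : -ψ 0 - ψ 3 = 0 := by simpa using congrFun h5 1
    have e47 : ψ 4 - ψ 7 = 0 := by simpa using congrFun h5 5
    refine ⟨ψ 7, ψ 3, ?_⟩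
    ext k
    fin_cases k <;> simp <;> linarith
  · rintro ⟨a, b, rfl⟩ i
    fin_cases i
    all_goals simp only [Fin.zero_eta, Fin.mk_one, Fin.reduceFinMk, spinLift_Aex5_one_zero,
      spinLift_Aex5_one_six, spinLift_Aex5_one_one_mulVec, spinLift_Aex5_one_two_mulVec,
      spinLift_Aex5_one_three_mulVec, spinLift_Aex5_one_four_mulVec,
      spinLift_Aex5_one_five_mulVec, zero_mulVec]
    all_goals
      ext k
      fin_cases k <;> simp <;> ring

/-- two invariant parallel spinors for example (5). -/
theorem stmt19 (t : ℝ) (ht : 0 < t) :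
    ∀ ψ : Fin 8 → ℝ, (∀ i : Fin 7, (spinLift (Aex5 t i)).mulVec ψ = 0) ↔
      ψ ∈ Submodule.span ℝ
        {(![0, 0, 0, 0, 1, 1, -1, 1] : Fin 8 → ℝ),
         ![-1, 1, 1, 1, 0, 0, 0, 0]} := by
  intro ψ
  rw [Aex5_eq_smul t]
  simp only [Pi.smul_apply, spinLift_smul, smul_mulVec, smul_eq_zero_iff_right ht.ne']
  exact forall_spinLift_Aex5_one_mulVec_eq_zero_iff ψ
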